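/- arXiv:1010.5318 — 5 statements merged into one kernel-verified Lean document; each statement's English description precedes it below -/
import Mathlib

section
/- Let P be a set of states of a deterministic automaton and let {P₁, P₂} be a partition of P (P = P₁ ∪ P₂, P₁ ∩ P₂ = ∅, both nonempty). For any letter a and any set of states R, the common refinement of the partitions (P,a)|R and (P₁,a)|R equals the common refinement of (P,a)|R and (P₂,a)|R, and also equals the common refinement of (P₁,a)|R and (P₂,a)|R. -/
/-!
Let `B₁, B₂` be the preimages of `P₁, P₂` under `· a`; they are disjoint with union the preimage
of `P`. Each of the three common refinements is the partition of `R` into the nonempty sets among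
`R ∩ B₁`, `R ∩ B₂` and `R \ (B₁ ∪ B₂)`. Since an intersection of two sets is nonempty only if both
are, it suffices to compute the sets of pairwise intersections of the (possibly empty) blocks.
-/

def splitPart {Q A : Type*} (step : Q → A → Q) (P : Set Q) (a : A) (R : Set Q) :
    Set (Set Q) :=
  {S | S.Nonempty ∧ (S = R ∩ {q | step q a ∈ P} ∨ S = R \ {q | step q a ∈ P})}

/-- Common refinement of two partitions: nonempty intersections of blocks. -/
def commonRef {Q : Type*} (Ps Qs : Set (Set Q)) : Set (Set Q) :=
  {S | S.Nonempty ∧ ∃ B ∈ Ps, ∃ C ∈ Qs, S = B ∩ C}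

open Set

section
variable {Q : Type*}

theorem commonRef_sep_nonempty (X Y : Set (Set Q)) :
    commonRef {S ∈ X | S.Nonempty} {S ∈ Y | S.Nonempty} =
      {S ∈ image2 (· ∩ ·) X Y | S.Nonempty} := by
  ext S
  constructor
  · rintro ⟨hS, B, ⟨hB, -⟩, C, ⟨hC, -⟩, rfl⟩
    exact ⟨mem_image2_of_mem hB hC, hS⟩
  · rintro ⟨⟨B, hB, C, hC, rfl⟩, hS⟩
    exact ⟨hS, B, ⟨hB, hS.mono inter_subset_left⟩, C, ⟨hC, hS.mono inter_subset_right⟩,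
      rfl⟩

theorem splitPart_eq_sep {A : Type*} (step : Q → A → Q) (P : Set Q) (a : A) (R : Set Q) :
    splitPart step P a R =
      {S ∈ ({R ∩ (step · a) ⁻¹' P, R \ (step · a) ⁻¹' P} : Set (Set Q)) | S.Nonempty} := by
  ext S
  simp only [splitPart, mem_ofPred_eq, mem_insert_iff, mem_singleton_iff, and_comm]
  rfl

theorem image2_inter_pair_union_left {R B₁ B₂ : Set Q} (hd : Disjoint B₁ B₂) :
    image2 (· ∩ ·) {R ∩ (B₁ ∪ B₂), R \ (B₁ ∪ B₂)} {R ∩ B₁, R \ B₁} =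
      {R ∩ B₁, R ∩ B₂, ∅, R \ (B₁ ∪ B₂)} := by
  simp only [image2_insert_left, image2_singleton_left, image_insert_eq, image_singleton,
    insert_union, singleton_union]
  have e₁ : R ∩ (B₁ ∪ B₂) ∩ (R ∩ B₁) = R ∩ B₁ := by tauto_set
  have e₂ : R ∩ (B₁ ∪ B₂) ∩ (R \ B₁) = R ∩ B₂ := by tauto_set
  have e₃ : R \ (B₁ ∪ B₂) ∩ (R ∩ B₁) = ∅ := by tauto_set
  have e₄ : R \ (B₁ ∪ B₂) ∩ (R \ B₁) = R \ (B₁ ∪ B₂) := by tauto_set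
  rw [e₁, e₂, e₃, e₄]

theorem image2_inter_pair_pair {R B₁ B₂ : Set Q} (hd : Disjoint B₁ B₂) :
    image2 (· ∩ ·) {R ∩ B₁, R \ B₁} {R ∩ B₂, R \ B₂} =
      {R ∩ B₁, R ∩ B₂, ∅, R \ (B₁ ∪ B₂)} := by
  simp only [image2_insert_left, image2_singleton_left, image_insert_eq, image_singleton,
    insert_union, singleton_union]
  have e₁ : R ∩ B₁ ∩ (R ∩ B₂) = ∅ := by tauto_set
  have e₂ : R ∩ B₁ ∩ (R \ B₂) = R ∩ B₁ := by tauto_set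
  have e₃ : R \ B₁ ∩ (R ∩ B₂) = R ∩ B₂ := by tauto_set
  have e₄ : R \ B₁ ∩ (R \ B₂) = R \ (B₁ ∪ B₂) := by tauto_set
  rw [e₁, e₂, e₃, e₄, insert_comm ∅, insert_comm ∅]

end

theorem stmt_1_general {Q A : Type*} (step : Q → A → Q) (P P₁ P₂ : Set Q)
    (hunion : P = P₁ ∪ P₂) (hdisj : P₁ ∩ P₂ = ∅)
    (a : A) (R : Set Q) :
    commonRef (splitPart step P a R) (splitPart step P₁ a R) =
        commonRef (splitPart step P a R) (splitPart step P₂ a R) ∧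
      commonRef (splitPart step P a R) (splitPart step P₁ a R) =
        commonRef (splitPart step P₁ a R) (splitPart step P₂ a R) := by
  set B₁ := (step · a) ⁻¹' P₁
  set B₂ := (step · a) ⁻¹' P₂
  have hP : (step · a) ⁻¹' P = B₁ ∪ B₂ := by rw [hunion, preimage_union]
  have hd : Disjoint B₁ B₂ := (disjoint_iff_inter_eq_empty.2 hdisj).preimage _
  set blocks : Set (Set Q) := {R ∩ B₁, R ∩ B₂, ∅, R \ (B₁ ∪ B₂)}
  have hPP₁ : commonRef (splitPart step P a R) (splitPart step P₁ a R) =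
      {S ∈ blocks | S.Nonempty} := by
    rw [splitPart_eq_sep, splitPart_eq_sep, hP, commonRef_sep_nonempty,
      image2_inter_pair_union_left hd]
  have hPP₂ : commonRef (splitPart step P a R) (splitPart step P₂ a R) =
      {S ∈ blocks | S.Nonempty} := by
    rw [splitPart_eq_sep, splitPart_eq_sep, hP, commonRef_sep_nonempty, union_comm,
      image2_inter_pair_union_left hd.symm, insert_comm, union_comm]
  have hP₁P₂ : commonRef (splitPart step P₁ a R) (splitPart step P₂ a R) =
      {S ∈ blocks | S.Nonempty} := by
    rw [splitPart_eq_sep, splitPart_eq_sep, commonRef_sep_nonempty, image2_inter_pair_pair hd]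
  exact ⟨hPP₁.trans hPP₂.symm, hPP₁.trans hP₁P₂.symm⟩

theorem stmt_1 {Q A : Type*} (step : Q → A → Q) (P P₁ P₂ : Set Q)
    (hunion : P = P₁ ∪ P₂) (hdisj : P₁ ∩ P₂ = ∅)
    (h1 : P₁.Nonempty) (h2 : P₂.Nonempty) (a : A) (R : Set Q) :
    commonRef (splitPart step P a R) (splitPart step P₁ a R) =
        commonRef (splitPart step P a R) (splitPart step P₂ a R) ∧
      commonRef (splitPart step P a R) (splitPart step P₁ a R) =
        commonRef (splitPart step P₁ a R) (splitPart step P₂ a R) :=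
  stmt_1_general step P P₁ P₂ hunion hdisj a R
end

section
/- For a deterministic automaton, call a partition 𝒫 of the states admissible if F is saturated by 𝒫 and no splitter (P,a) with P ∈ 𝒫, a ∈ A splits any class of 𝒫 (i.e., for all P, R ∈ 𝒫 and a ∈ A, either R·a ⊆ P or R·a ∩ P = ∅); then the Nerode partition is the coarsest admissible partition, so in particular every admissible partition refines the Nerode partition and states in the same block of an admissible 𝒫 have equal futures. -/
def run {Q A : Type*} (step : Q → A → Q) : Q → List A → Q
  | q, [] => q
  | q, a :: w => run step (step q a) w

def future {Q A : Type*} (step : Q → A → Q) (F : Set Q) (q : Q) : Set (List A) :=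
  {w | run step q w ∈ F}

lemma future_step {Q A : Type*} (step : Q → A → Q) (F : Set Q) (q : Q) (a : A) :
    future step F (step q a) = {w | a :: w ∈ future step F q} := rfl

/-- The Nerode partition is the coarsest partition of `Q` saturating `F` such that
no splitter `(P,a)` splits any class: (1) any partition with these properties is
refined by the Nerode partition (states in a common block have equal futures);
(2) the Nerode partition itself has these properties. -/
theorem stmt_5 {Q A : Type*} (step : Q → A → Q) (F : Set Q) :
    (∀ Ps : Set (Set Q),
        (∀ B ∈ Ps, B.Nonempty) →
        (⋃₀ Ps = Set.univ) →
        (∀ B ∈ Ps, ∀ C ∈ Ps, B ≠ C → B ∩ C = ∅) →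
        (∀ B ∈ Ps, B ⊆ F ∨ B ∩ F = ∅) →
        (∀ P ∈ Ps, ∀ R ∈ Ps, ∀ a : A,
          (∀ q ∈ R, step q a ∈ P) ∨ (∀ q ∈ R, step q a ∉ P)) →
        ∀ B ∈ Ps, ∀ p ∈ B, ∀ q ∈ B, future step F p = future step F q) ∧
    (let Ns : Set (Set Q) := {S | ∃ p : Q, S = {q | future step F q = future step F p}}
     (∀ B ∈ Ns, B ⊆ F ∨ B ∩ F = ∅) ∧
     (∀ P ∈ Ns, ∀ R ∈ Ns, ∀ a : A,
        (∀ q ∈ R, step q a ∈ P) ∨ (∀ q ∈ R, step q a ∉ P))) := by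
  constructor
  · intro Ps hne hcov hdisj hsat hsplit B hB p hp q hq
    -- key: same block is preserved by steps
    have key : ∀ w : List A, ∀ p q : Q, (∃ B ∈ Ps, p ∈ B ∧ q ∈ B) →
        ∃ B ∈ Ps, run step p w ∈ B ∧ run step q w ∈ B := by
      intro w
      induction w with
      | nil => intro p q h; exact h
      | cons a w ih =>
        intro p q ⟨B, hB, hp, hq⟩
        apply ih
        have : step p a ∈ ⋃₀ Ps := by rw [hcov]; trivial
        obtain ⟨P, hP, hpa⟩ := this
        rcases hsplit P hP B hB a with h | h
        · exact ⟨P, hP, h p hp, h q hq⟩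
        · exact absurd hpa (h p hp)
    ext w
    obtain ⟨C, hC, hpw, hqw⟩ := key w p q ⟨B, hB, hp, hq⟩
    rcases hsat C hC with h | h
    · exact ⟨fun _ => h hqw, fun _ => h hpw⟩
    · constructor <;> intro hw <;>
        [exact absurd (Set.eq_empty_iff_forall_notMem.mp h _ ⟨hpw, hw⟩) not_false;
         exact absurd (Set.eq_empty_iff_forall_notMem.mp h _ ⟨hqw, hw⟩) not_false]
  · intro Ns
    have memF : ∀ q : Q, q ∈ F ↔ ([] : List A) ∈ future step F q := fun q => Iff.rfl
    constructor
    · rintro B ⟨p, rfl⟩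
      by_cases hp : p ∈ F
      · left; intro q hq
        rw [memF q]
        rw [Set.mem_setOf_eq] at hq
        rw [hq]; exact hp
      · right
        ext q; simp only [Set.mem_inter_iff, Set.mem_setOf_eq, Set.mem_empty_iff_false,
          iff_false, not_and]
        intro hq hqF
        exact hp ((memF p).mpr (hq ▸ (memF q).mp hqF))
    · rintro P ⟨p, rfl⟩ R ⟨r, rfl⟩ a
      have hstep : ∀ q : Q, future step F q = future step F r →
          future step F (step q a) = future step F (step r a) := by
        intro q h
        rw [future_step, future_step, h]
      by_cases hc : future step F (step r a) = future step F p
      · left; intro q hq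
        rw [Set.mem_setOf_eq] at hq ⊢
        rw [hstep q hq]; exact hc
      · right; intro q hq
        rw [Set.mem_setOf_eq] at hq
        rw [Set.mem_setOf_eq, hstep q hq]
        exact hc
end

section
/- For a deterministic automaton with n states (n ≥ 2), the Moore equivalence ≡_{n-2} equals the Nerode equivalence; i.e., the depth of Moore's algorithm is at most n − 2. -/
def mooreFut {Q A : Type*} (step : Q → A → Q) (F : Set Q) (h : ℕ) (q : Q) :
    Set (List A) :=
  {w | w.length ≤ h ∧ run step q w ∈ F}

section Moore

variable {Q A : Type*} (step : Q → A → Q) (F : Set Q)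

lemma mooreFut_eq_future_inter (h : ℕ) (q : Q) :
    mooreFut step F h q = future step F q ∩ {w | w.length ≤ h} := by
  ext w
  simp [mooreFut, future, and_comm]

lemma mooreFut_eq_inter_of_le {h h' : ℕ} (hle : h ≤ h') (q : Q) :
    mooreFut step F h q = mooreFut step F h' q ∩ {w | w.length ≤ h} := by
  ext w
  simp only [mooreFut, Set.mem_inter_iff, Set.mem_ofPred_eq]
  constructor
  · rintro ⟨hw, hq⟩
    exact ⟨⟨hw.trans hle, hq⟩, hw⟩
  · rintro ⟨⟨-, hq⟩, hw⟩
    exact ⟨hw, hq⟩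

lemma mooreFut_eq_of_le {h h' : ℕ} (hle : h ≤ h') {p q : Q}
    (hpq : mooreFut step F h' p = mooreFut step F h' q) :
    mooreFut step F h p = mooreFut step F h q := by
  rw [mooreFut_eq_inter_of_le step F hle p, mooreFut_eq_inter_of_le step F hle q, hpq]

lemma mooreFut_eq_of_future_eq (h : ℕ) {p q : Q} (hpq : future step F p = future step F q) :
    mooreFut step F h p = mooreFut step F h q := by
  rw [mooreFut_eq_future_inter, mooreFut_eq_future_inter, hpq]

lemma mooreFut_eq_iff {h : ℕ} {p q : Q} :
    mooreFut step F h p = mooreFut step F h q ↔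
      ∀ w : List A, w.length ≤ h → (run step p w ∈ F ↔ run step q w ∈ F) := by
  simp only [Set.ext_iff, mooreFut, Set.mem_ofPred_eq]
  exact forall_congr' fun w =>
    ⟨fun hw hl => by simpa [hl] using hw, fun hw => and_congr_right hw⟩

lemma mooreFut_succ_eq_iff {h : ℕ} {p q : Q} :
    mooreFut step F (h + 1) p = mooreFut step F (h + 1) q ↔
      (p ∈ F ↔ q ∈ F) ∧
        ∀ a, mooreFut step F h (step p a) = mooreFut step F h (step q a) := by
  simp only [mooreFut_eq_iff]
  constructor
  · intro hpq
    exact ⟨hpq [] (Nat.zero_le _), fun a w hw => hpq (a :: w) (Nat.succ_le_succ hw)⟩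
  · rintro ⟨hnil, hcons⟩ (_ | ⟨a, w⟩) hw
    · exact hnil
    · exact hcons a w (Nat.le_of_succ_le_succ hw)

def IsMooreStable (h : ℕ) : Prop :=
  ∀ p q : Q, mooreFut step F h p = mooreFut step F h q →
    mooreFut step F (h + 1) p = mooreFut step F (h + 1) q

variable {step F}

lemma IsMooreStable.mooreFut_eq_add {h : ℕ} (hst : IsMooreStable step F h) (k : ℕ) {p q : Q}
    (hpq : mooreFut step F h p = mooreFut step F h q) :
    mooreFut step F (h + k) p = mooreFut step F (h + k) q := by
  induction k generalizing p q with
  | zero => exact hpq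
  | succ k ih =>
    obtain ⟨hF, hstep⟩ := (mooreFut_succ_eq_iff step F).1 (hst p q hpq)
    exact (mooreFut_succ_eq_iff step F).2 ⟨hF, fun a => ih (hstep a)⟩

lemma IsMooreStable.future_eq {h : ℕ} (hst : IsMooreStable step F h) {p q : Q}
    (hpq : mooreFut step F h p = mooreFut step F h q) : future step F p = future step F q := by
  ext w
  exact (mooreFut_eq_iff step F).1 (hst.mooreFut_eq_add w.length hpq) w (Nat.le_add_left _ _)

end Moore

section Count

variable {Q A : Type*} (step : Q → A → Q) (F : Set Q)

noncomputable def mooreClassCount (h : ℕ) : ℕ :=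
  (Set.range (mooreFut step F h)).ncard

variable [Finite Q]

lemma mooreClassCount_le_card (h : ℕ) : mooreClassCount step F h ≤ Nat.card Q := by
  rw [mooreClassCount, ← Set.image_univ]
  exact (Set.ncard_image_le Set.finite_univ).trans (Set.ncard_univ Q).le

lemma two_le_mooreClassCount_zero (hF : F.Nonempty) (hFc : Fᶜ.Nonempty) :
    2 ≤ mooreClassCount step F 0 := by
  obtain ⟨p, hp⟩ := hF
  obtain ⟨q, hq⟩ := hFc
  have hpq : mooreFut step F 0 p ≠ mooreFut step F 0 q := fun he =>
    hq (((mooreFut_eq_iff step F).1 he [] le_rfl).1 hp)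
  exact (Set.one_lt_ncard (Set.finite_range _)).2
    ⟨_, Set.mem_range_self p, _, Set.mem_range_self q, hpq⟩

lemma mooreClassCount_lt_succ {h : ℕ} (hst : ¬IsMooreStable step F h) :
    mooreClassCount step F h < mooreClassCount step F (h + 1) := by
  obtain ⟨p, q, hpq, hne⟩ : ∃ p q, mooreFut step F h p = mooreFut step F h q ∧
      mooreFut step F (h + 1) p ≠ mooreFut step F (h + 1) q := by
    simpa [IsMooreStable] using hst
  let truncate : Set (List A) → Set (List A) := (· ∩ {w | w.length ≤ h})
  have hrange : Set.range (mooreFut step F h) =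
      truncate '' Set.range (mooreFut step F (h + 1)) := by
    rw [← Set.range_comp]
    exact congrArg Set.range (funext (mooreFut_eq_inter_of_le step F (Nat.le_succ h)))
  have hnotinj : ¬Set.InjOn truncate (Set.range (mooreFut step F (h + 1))) := fun hinj =>
    hne (hinj (Set.mem_range_self p) (Set.mem_range_self q) <| by
      simpa only [truncate, ← mooreFut_eq_inter_of_le step F (Nat.le_succ h)] using hpq)
  rw [mooreClassCount, mooreClassCount, hrange]
  exact (Set.ncard_image_le (Set.finite_range _)).lt_of_ne fun he =>
    hnotinj (Set.injOn_of_ncard_image_eq he)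

lemma exists_isMooreStable_le (hF : F.Nonempty) (hFc : Fᶜ.Nonempty) :
    ∃ h ≤ Nat.card Q - 2, IsMooreStable step F h := by
  by_contra! hunstable
  have hgrow : ∀ k ≤ Nat.card Q - 1, k + 2 ≤ mooreClassCount step F k := by
    intro k
    induction k with
    | zero => exact fun _ => two_le_mooreClassCount_zero step F hF hFc
    | succ k ih =>
      intro hk
      have := mooreClassCount_lt_succ step F (hunstable k (by omega))
      have := ih (by omega)
      omega
  have := hgrow _ le_rfl
  have := mooreClassCount_le_card step F (Nat.card Q - 1)
  omega

end Count

theorem stmt_10_general {Q A : Type*} [Fintype Q] (step : Q → A → Q) (F : Set Q)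
    (hF : F.Nonempty) (hFc : Fᶜ.Nonempty) :
    ∀ p q : Q,
      mooreFut step F (Fintype.card Q - 2) p = mooreFut step F (Fintype.card Q - 2) q ↔
        future step F p = future step F q := by
  obtain ⟨h, hh, hst⟩ := exists_isMooreStable_le step F hF hFc
  rw [Nat.card_eq_fintype_card] at hh
  exact fun p q => ⟨fun hpq => hst.future_eq (mooreFut_eq_of_le step F hh hpq),
    mooreFut_eq_of_future_eq step F _⟩

theorem stmt_10 {Q A : Type*} [Fintype Q] (step : Q → A → Q) (F : Set Q)
    (hn : 2 ≤ Fintype.card Q) (hF : F.Nonempty) (hFc : Fᶜ.Nonempty) :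
    ∀ p q : Q,
      mooreFut step F (Fintype.card Q - 2) p = mooreFut step F (Fintype.card Q - 2) q ↔
        future step F p = future step F q :=
  stmt_10_general step F hF hFc
end

section
/- Let 𝒜 be a deterministic automaton whose states all lie on a single simple cycle of length n labeled by a single letter a (i·a = next state, cyclically), with final states given by the positions where a binary word w = b₁…b_n has letter 1. Then two states i, j are Nerode-equivalent if and only if the circular shifts of w by i and by j coincide: b_{i+k mod n} = b_{j+k mod n} for all k ≥ 0. Consequently the cyclic automaton 𝒜_w is minimal if and only if w is a primitive word. -/
open Fin.NatCast

/-! Reading a word of length `k` moves state `i` of the cycle to `i + k`, so the future of `i`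
is determined by the rotation `x ↦ b (i + x)` of the word, and two states are Nerode-equivalent
exactly when their rotations agree. Minimality is then injectivity of `i ↦ (x ↦ b (i + x))`,
which in a group amounts to the word having no nonzero period. -/

section Counter

variable {Q A : Type*} [AddMonoidWithOne Q]

theorem run_add_one (q : Q) (w : List A) :
    run (fun s (_ : A) => s + 1) q w = q + w.length := by
  induction w generalizing q with
  | nil => simp [run]
  | cons a w ih =>
    rw [run, ih, List.length_cons, Nat.add_comm, Nat.cast_add, Nat.cast_one, add_assoc]

theorem future_add_one_eq_iff [Nonempty A] {F : Set Q} {q q' : Q} :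
    future (fun s (_ : A) => s + 1) F q = future (fun s (_ : A) => s + 1) F q' ↔
      ∀ k : ℕ, (q + k ∈ F ↔ q' + k ∈ F) := by
  simp only [future, run_add_one, Set.ext_iff, Set.mem_ofPred_eq]
  refine ⟨fun h k => ?_, fun h w => h w.length⟩
  obtain ⟨a⟩ := ‹Nonempty A›
  simpa using h (List.replicate k a)

end Counter

theorem injective_shift_iff {G α : Type*} [AddCommGroup G] (b : G → α) :
    Function.Injective (fun i x => b (i + x)) ↔ ∀ d, (∀ i, b (i + d) = b i) → d = 0 := by
  refine ⟨fun h d hd => h (funext fun x => ?_), fun h i j hij => ?_⟩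
  · simp only [add_comm d, hd, zero_add]
  · refine sub_eq_zero.mp (h (i - j) fun x => ?_)
    have : b (i + (x - j)) = b (j + (x - j)) := congrFun hij (x - j)
    rwa [add_sub_cancel, add_sub_left_comm] at this

theorem Fin.forall_natCast_iff {n : ℕ} [NeZero n] {P : Fin n → Prop} :
    (∀ k : ℕ, P k) ↔ ∀ x, P x :=
  ⟨fun h x => by simpa using h x.val, fun h k => h k⟩

/-- In the cyclic automaton of a binary circular word `b` of length `n`, two states
are Nerode-equivalent iff the corresponding circular shifts of `b` coincide;
consequently the automaton is minimal iff the circular word is primitive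
(no nontrivial rotation fixes it). -/
theorem stmt_15 (n : ℕ) [NeZero n] (b : Fin n → Bool) :
    (∀ i j : Fin n,
        future (fun (s : Fin n) (_ : Unit) => s + 1) {s : Fin n | b s = true} i =
          future (fun (s : Fin n) (_ : Unit) => s + 1) {s : Fin n | b s = true} j ↔
        ∀ k : ℕ, b (i + (k : Fin n)) = b (j + (k : Fin n))) ∧
    ((∀ i j : Fin n,
        future (fun (s : Fin n) (_ : Unit) => s + 1) {s : Fin n | b s = true} i =
          future (fun (s : Fin n) (_ : Unit) => s + 1) {s : Fin n | b s = true} j →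
        i = j) ↔
      ∀ d : Fin n, (∀ i : Fin n, b (i + d) = b i) → d = 0) := by
  have nerode (i j : Fin n) :
      future (fun (s : Fin n) (_ : Unit) => s + 1) {s : Fin n | b s = true} i =
          future (fun (s : Fin n) (_ : Unit) => s + 1) {s : Fin n | b s = true} j ↔
        ∀ k : ℕ, b (i + (k : Fin n)) = b (j + (k : Fin n)) := by
    rw [future_add_one_eq_iff]
    exact forall_congr' fun k => Bool.eq_iff_iff.symm
  refine ⟨nerode, ?_⟩
  rw [← injective_shift_iff]
  refine forall₂_congr fun i j => imp_congr_left ?_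
  rw [nerode, funext_iff, Fin.forall_natCast_iff (P := fun x => b (i + x) = b (j + x))]
end

section
/- In a local automaton (a deterministic automaton, all of whose states are final, in which distinct cycles carry different labels), if q·uᵏ = q for a state q, a word u and an integer k ≥ 1, then q·u = q. -/
theorem run_append {Q A : Type*} (step : Q → A → Q) (q : Q) (a b : List A) :
    run step q (a ++ b) = run step (run step q a) b := by
  induction a generalizing q with
  | nil => rfl
  | cons x xs ih => simp [run, ih]

theorem pow_comm_aux {A : Type*} (u : List A) (k : ℕ) :
    (List.replicate k u).flatten ++ u = u ++ (List.replicate k u).flatten := by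
  induction k with
  | zero => simp
  | succ n ih => simp only [List.replicate_succ, List.flatten_cons, List.append_assoc, ih]

/-- In a local automaton (two distinct cycles carry different labels),
`q·uᵏ = q` with `k ≥ 1` implies `q·u = q`; hence cycle labels are primitive. -/
theorem stmt_16 {Q A : Type*} (step : Q → A → Q)
    (hloc : ∀ w : List A, w ≠ [] → ∀ p q : Q,
      run step p w = p → run step q w = q → p = q)
    (q : Q) (u : List A) (k : ℕ) (hk : 1 ≤ k)
    (hcyc : run step q (List.replicate k u).flatten = q) :
    run step q u = q := by
  rcases eq_or_ne u [] with rfl | hu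
  · rfl
  · set w := (List.replicate k u).flatten with hw
    have hwne : w ≠ [] := by
      obtain ⟨n, rfl⟩ := Nat.exists_eq_add_of_le hk
      simp [hw, List.replicate_succ, hu]
    have hp : run step (run step q u) w = run step q u := by
      rw [← run_append, ← pow_comm_aux, run_append, hcyc]
    exact hloc w hwne (run step q u) q hp hcyc
end
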